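/- arXiv:2511.21292 — 6 statements merged into one kernel-verified Lean document; each statement's English description precedes it below -/
import Mathlib

section
/- Let $q = 2^n$ with $n \geq 2$ and let $h(y) = y^{q/2} + y^{q/4} + \cdots + y^2 + y$. The set $\Omega = \{c \in \mathbb{F}_{q^2} : h(c) = 0\}$ is an additive subgroup of $\mathbb{F}_{q^2}$ of cardinality exactly $q/2$. -/
/-!
In characteristic `2` the polynomial `p = ∑_{i<n} X^(2^i)` satisfies `p² - p = X^q - X`, so `p` divides
`X^q - X` and hence `X^(q²) - X`, which is the product of `X - c` over all `c ∈ 𝔽_{q²}`. A divisor of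
that product has exactly as many roots in `𝔽_{q²}` as its degree, here `2^(n-1) = q/2`. The zero set
of `h` is a subgroup because `h` is a sum of iterates of the Frobenius endomorphism.
-/

/-- The Abdón--Torres additive polynomial map `h(y) = y^(q/2) + ... + y^2 + y`
    on `F_{q^2}` with `q = 2^n`, i.e. `h(y) = ∑_{i=0}^{n-1} y^(2^i)`. -/
noncomputable def hAT (n : ℕ) (y : GaloisField 2 (2*n)) : GaloisField 2 (2*n) :=
  ∑ i ∈ Finset.range n, y ^ (2 ^ i)

open Polynomial Finset

namespace Polynomial

variable {R : Type*} [CommRing R]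

variable (R) in
noncomputable def twoPowSum (n : ℕ) : R[X] :=
  ∑ i ∈ range n, X ^ 2 ^ i

lemma eval_twoPowSum (n : ℕ) (x : R) : (twoPowSum R n).eval x = ∑ i ∈ range n, x ^ 2 ^ i := by
  simp [twoPowSum, eval_finsetSum]

lemma degree_twoPowSum_lt (n : ℕ) : (twoPowSum R n).degree < (2 ^ n : ℕ) :=
  (degree_sum_le _ _).trans_lt <| (Finset.sup_lt_iff (WithBot.bot_lt_coe _)).2 fun i hi =>
    (degree_X_pow_le _).trans_lt <| by
      exact_mod_cast Nat.pow_lt_pow_right one_lt_two (mem_range.1 hi)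

lemma natDegree_twoPowSum [Nontrivial R] {n : ℕ} (hn : n ≠ 0) :
    (twoPowSum R n).natDegree = 2 ^ (n - 1) := by
  obtain ⟨m, rfl⟩ := Nat.exists_eq_succ_of_ne_zero hn
  rw [twoPowSum, sum_range_succ, ← twoPowSum, natDegree_add_eq_right_of_degree_lt, natDegree_X_pow]
  · rfl
  · rw [degree_X_pow]
    exact degree_twoPowSum_lt m

lemma sq_twoPowSum_sub [CharP R 2] (n : ℕ) :
    twoPowSum R n ^ 2 - twoPowSum R n = X ^ 2 ^ n - X := by
  rw [twoPowSum, sum_pow_char, ← sum_sub_distrib]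
  simp_rw [← pow_mul, ← pow_succ]
  exact (sum_range_sub (fun i => (X : R[X]) ^ 2 ^ i) n).trans (by simp)

lemma twoPowSum_dvd_X_pow_sub_X [CharP R 2] (n : ℕ) : twoPowSum R n ∣ X ^ 2 ^ n - X :=
  Dvd.intro (twoPowSum R n - 1) <| by rw [← sq_twoPowSum_sub]; ring

lemma X_pow_sub_X_dvd_X_pow_sq_sub_X (q : ℕ) : (X ^ q - X : R[X]) ∣ X ^ q ^ 2 - X := by
  have h : (X : R[X]) ^ q ^ 2 - X = ((X ^ q) ^ q - X ^ q) + (X ^ q - X) := by ring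
  exact h ▸ dvd_add (sub_dvd_pow_sub_pow _ _ _) dvd_rfl

end Polynomial

lemma FiniteField.nat_card_setOf_isRoot_of_dvd {F : Type*} [Field F] [Fintype F] {f : F[X]}
    (hf : f ∣ X ^ Fintype.card F - X) : Nat.card {x | f.IsRoot x} = f.natDegree := by
  classical
  have hg : (X ^ Fintype.card F - X : F[X]) ≠ 0 := X_pow_card_sub_X_ne_zero F Fintype.one_lt_card
  have hg_splits : (X ^ Fintype.card F - X : F[X]).Splits := by
    rw [splits_iff_card_roots, roots_X_pow_card_sub_X,
      X_pow_card_sub_X_natDegree_eq F Fintype.one_lt_card]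
    rfl
  have hf0 : f ≠ 0 := ne_zero_of_dvd_ne_zero hg hf
  have hnodup : f.roots.Nodup :=
    Multiset.nodup_of_le (roots.le_of_dvd hg hf) (roots_X_pow_card_sub_X F ▸ univ.nodup)
  have hset : {x | f.IsRoot x} = (f.roots.toFinset : Set F) := by
    ext x
    simp [mem_roots hf0]
  rw [hset, Nat.card_coe_set_eq, Set.ncard_coe_finset, Multiset.toFinset_card_of_nodup hnodup,
    ← splits_iff_card_roots.1 (hg_splits.of_dvd hg hf)]

theorem stmt1 (n : ℕ) (hn : 2 ≤ n) :
    (∃ S : AddSubgroup (GaloisField 2 (2*n)), (S : Set (GaloisField 2 (2*n))) = {c | hAT n c = 0}) ∧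
    Nat.card {c : GaloisField 2 (2*n) | hAT n c = 0} = 2 ^ n / 2 := by
  let := Fintype.ofFinite (GaloisField 2 (2*n))
  have hcard : Fintype.card (GaloisField 2 (2*n)) = (2 ^ n) ^ 2 := by
    rw [← Nat.card_eq_fintype_card, GaloisField.card 2 _ (by omega), ← pow_mul, mul_comm]
  refine ⟨⟨(∑ i ∈ range n, (iterateFrobenius (GaloisField 2 (2*n)) 2 i).toAddMonoidHom).ker, ?_⟩, ?_⟩
  · ext c
    simp [hAT, iterateFrobenius_def]
  · have hzeros : {c | hAT n c = 0} = {c | (twoPowSum (GaloisField 2 (2*n)) n).IsRoot c} := by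
      ext c
      simp [hAT, eval_twoPowSum]
    rw [hzeros, FiniteField.nat_card_setOf_isRoot_of_dvd, natDegree_twoPowSum (by omega),
      ← Nat.pow_div (by omega : 1 ≤ n) two_pos, pow_one]
    rw [hcard]
    exact (twoPowSum_dvd_X_pow_sub_X n).trans (X_pow_sub_X_dvd_X_pow_sq_sub_X _)
end

section
/- Let $q = 2^n$ with $n \geq 2$ and $h(y) = y^{q/2} + y^{q/4} + \cdots + y^2 + y$. For every $a \in \mathbb{F}_{q^2}$, the number of $b \in \mathbb{F}_{q^2}$ with $h(b) = a^{q+1}$ is exactly $q/2$. -/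
open Finset Polynomial

theorem AddMonoidHom.card_ker_mul_card_range {G H : Type*} [AddGroup G] [AddGroup H]
    (f : G →+ H) : Nat.card f.ker * Nat.card f.range = Nat.card G := by
  rw [← AddSubgroup.index_ker, AddSubgroup.card_mul_index]

theorem AddSubgroup.card_comap_le {G H : Type*} [AddGroup G] [AddGroup H] [Finite G] [Finite H]
    (f : G →+ H) (S : AddSubgroup H) :
    Nat.card (S.comap f) ≤ Nat.card f.ker * Nat.card S := by
  set g := f.domRestrict (S.comap f)
  have hker : Nat.card g.ker ≤ Nat.card f.ker := by
    rw [AddMonoidHom.ker_domRestrict]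
    exact Nat.card_le_card_of_injective (fun x => ⟨x.1, AddSubgroup.mem_addSubgroupOf.mp x.2⟩)
      fun x y hxy => Subtype.ext (Subtype.ext (Subtype.mk.inj hxy))
  have hrange : Nat.card g.range ≤ Nat.card S := by
    rw [AddMonoidHom.domRestrict_range]
    exact AddSubgroup.card_le_of_le (AddSubgroup.map_comap_le _ _)
  rw [← g.card_ker_mul_card_range]
  exact Nat.mul_le_mul hker hrange

theorem AddMonoidHom.card_fiber_eq_card_ker {G H : Type*} [AddGroup G] [AddGroup H] (f : G →+ H)
    {c : H} (hc : c ∈ f.range) : Nat.card {x | f x = c} = Nat.card f.ker := by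
  obtain ⟨x, rfl⟩ := hc
  exact Nat.card_congr (f.fiberEquivKer x)

theorem pow_natCard_eq_self {K : Type*} [GroupWithZero K] [Finite K] (y : K) :
    y ^ Nat.card K = y := by
  have := Fintype.ofFinite K
  rw [Nat.card_eq_fintype_card, FiniteField.pow_card]

section CharTwo

variable (K : Type*) [CommRing K] [CharP K 2]

noncomputable def frobeniusSum (n : ℕ) : K →+ K :=
  ∑ i ∈ range n, (iterateFrobenius K 2 i : K →+ K)

noncomputable def iterateFrobeniusAddId (n : ℕ) : K →+ K :=
  (iterateFrobenius K 2 n : K →+ K) + AddMonoidHom.id K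

variable {K}

theorem frobeniusSum_apply (n : ℕ) (y : K) : frobeniusSum K n y = ∑ i ∈ range n, y ^ 2 ^ i := by
  simp [frobeniusSum, AddMonoidHom.finsetSum_apply, iterateFrobenius_def]

theorem iterateFrobeniusAddId_apply (n : ℕ) (y : K) :
    iterateFrobeniusAddId K n y = y ^ 2 ^ n + y := by
  simp [iterateFrobeniusAddId, iterateFrobenius_def]

theorem frobeniusSum_sq (n : ℕ) (y : K) : frobeniusSum K n y ^ 2 = frobeniusSum K n (y ^ 2) := by
  simp only [frobeniusSum_apply, sum_pow_char, ← pow_mul, mul_comm]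

theorem frobeniusSum_sq_add_self (n : ℕ) (y : K) :
    frobeniusSum K n y ^ 2 + frobeniusSum K n y = y ^ 2 ^ n + y := by
  have h := sum_range_succ' (fun i => y ^ 2 ^ i) n
  rw [sum_range_succ] at h
  simp only [frobeniusSum_apply, sum_pow_char, ← pow_mul, ← pow_succ]
  linear_combination h +
    (∑ i ∈ range n, y ^ 2 ^ (i + 1) - y ^ 2 ^ n) * CharTwo.two_eq_zero (R := K)

theorem frobeniusSum_two_apply (y : K) : frobeniusSum K 2 y = y ^ 2 + y := by
  simp [frobeniusSum_apply, sum_range_succ, add_comm]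

theorem frobeniusSum_two_comp_frobeniusSum (n : ℕ) :
    (frobeniusSum K 2).comp (frobeniusSum K n) = iterateFrobeniusAddId K n := by
  ext y
  simp [frobeniusSum_two_apply, iterateFrobeniusAddId_apply, frobeniusSum_sq_add_self]

theorem frobeniusSum_comp_frobeniusSum_two (n : ℕ) :
    (frobeniusSum K n).comp (frobeniusSum K 2) = iterateFrobeniusAddId K n := by
  ext y
  simp [frobeniusSum_two_apply, iterateFrobeniusAddId_apply, ← frobeniusSum_sq,
    frobeniusSum_sq_add_self]

theorem card_ker_frobeniusSum_le [IsDomain K] {n : ℕ} (hn : 0 < n) :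
    Nat.card (frobeniusSum K n).ker ≤ 2 ^ (n - 1) := by
  set P : K[X] := ∑ i ∈ range n, X ^ 2 ^ i
  have hP : P ≠ 0 := by
    refine ne_of_apply_ne (coeff · 1) ?_
    simp [P, coeff_X_pow, eq_comm (a := 1), hn]
  have hdeg : P.natDegree ≤ 2 ^ (n - 1) :=
    natDegree_sum_le_of_forall_le _ _ fun i hi =>
      (natDegree_X_pow_le _).trans (Nat.pow_le_pow_right two_pos (by grind))
  have hker : ((frobeniusSum K n).ker : Set K) ⊆ P.rootSet K := fun y hy => by
    simpa [mem_rootSet, hP, P, frobeniusSum_apply] using hy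
  calc Nat.card (frobeniusSum K n).ker ≤ (P.rootSet K).ncard :=
        (Nat.card_coe_set_eq _).trans_le (Set.ncard_le_ncard hker (Set.toFinite _))
    _ ≤ P.natDegree := P.ncard_rootSet_le K
    _ ≤ 2 ^ (n - 1) := hdeg

theorem card_ker_iterateFrobeniusAddId_le_mul_two [IsDomain K] [Finite K] (n : ℕ) :
    Nat.card (iterateFrobeniusAddId K n).ker ≤ Nat.card (frobeniusSum K n).ker * 2 := by
  rw [← frobeniusSum_two_comp_frobeniusSum, ← AddMonoidHom.comap_ker]
  exact (AddSubgroup.card_comap_le _ _).trans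
    (Nat.mul_le_mul_left _ (card_ker_frobeniusSum_le two_pos))

end CharTwo

section FiniteField

variable {K : Type*} [Field K] [CharP K 2] {n : ℕ}

theorem range_iterateFrobeniusAddId_le_ker [Finite K] (hK : Nat.card K = 2 ^ (2 * n)) :
    (iterateFrobeniusAddId K n).range ≤ (iterateFrobeniusAddId K n).ker := by
  rintro _ ⟨y, rfl⟩
  rw [AddMonoidHom.mem_ker, iterateFrobeniusAddId_apply, iterateFrobeniusAddId_apply,
    add_pow_char_pow, ← pow_mul, ← pow_add, ← two_mul, ← hK, pow_natCard_eq_self, add_comm y,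
    CharTwo.add_self_eq_zero]

theorem pow_two_pow_add_one_mem_ker [Finite K] (hK : Nat.card K = 2 ^ (2 * n)) (a : K) :
    a ^ (2 ^ n + 1) ∈ (iterateFrobeniusAddId K n).ker := by
  have hq : 2 ^ n * 2 ^ n = 2 ^ (2 * n) := by rw [← pow_add, two_mul]
  rw [AddMonoidHom.mem_ker, iterateFrobeniusAddId_apply, ← pow_mul, add_one_mul, pow_add, hq,
    ← hK, pow_natCard_eq_self, ← pow_succ', CharTwo.add_self_eq_zero]

theorem card_ker_mul_card_range_iterateFrobeniusAddId (hK : Nat.card K = 2 ^ (2 * n)) :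
    Nat.card (iterateFrobeniusAddId K n).ker * Nat.card (iterateFrobeniusAddId K n).range =
      2 ^ n * 2 ^ n := by
  rw [AddMonoidHom.card_ker_mul_card_range, hK, ← pow_add, two_mul]

theorem card_ker_iterateFrobeniusAddId [Finite K] (hn : 0 < n)
    (hK : Nat.card K = 2 ^ (2 * n)) :
    Nat.card (iterateFrobeniusAddId K n).ker = 2 ^ n := by
  have hle : Nat.card (iterateFrobeniusAddId K n).ker ≤ 2 ^ n :=
    calc _ ≤ 2 ^ (n - 1) * 2 := (card_ker_iterateFrobeniusAddId_le_mul_two n).trans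
          (Nat.mul_le_mul_right _ (card_ker_frobeniusSum_le hn))
      _ = 2 ^ n := Nat.two_pow_pred_mul_two hn
  have hrange := AddSubgroup.card_le_of_le (range_iterateFrobeniusAddId_le_ker hK)
  have hmul := card_ker_mul_card_range_iterateFrobeniusAddId hK
  nlinarith

theorem range_iterateFrobeniusAddId_eq_ker [Finite K] (hn : 0 < n)
    (hK : Nat.card K = 2 ^ (2 * n)) :
    (iterateFrobeniusAddId K n).range = (iterateFrobeniusAddId K n).ker := by
  refine AddSubgroup.eq_of_le_of_card_ge (range_iterateFrobeniusAddId_le_ker hK) ?_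
  have hmul := card_ker_mul_card_range_iterateFrobeniusAddId hK
  rw [card_ker_iterateFrobeniusAddId hn hK] at hmul ⊢
  exact (Nat.eq_of_mul_eq_mul_left (by positivity) hmul).ge

theorem card_ker_frobeniusSum [Finite K] (hn : 0 < n) (hK : Nat.card K = 2 ^ (2 * n)) :
    Nat.card (frobeniusSum K n).ker = 2 ^ (n - 1) := by
  refine le_antisymm (card_ker_frobeniusSum_le hn) (Nat.le_of_mul_le_mul_right ?_ two_pos)
  rw [← pow_succ, Nat.sub_add_cancel (hn), ← card_ker_iterateFrobeniusAddId hn hK]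
  exact card_ker_iterateFrobeniusAddId_le_mul_two n

end FiniteField

theorem stmt2 (n : ℕ) (hn : 2 ≤ n) (a : GaloisField 2 (2*n)) :
    Nat.card {b : GaloisField 2 (2*n) | hAT n b = a ^ (2 ^ n + 1)} = 2 ^ n / 2 := by
  have hn0 : 0 < n := by omega
  have hK : Nat.card (GaloisField 2 (2 * n)) = 2 ^ (2 * n) := GaloisField.card 2 (2 * n) (by omega)
  have hmem : a ^ (2 ^ n + 1) ∈ (frobeniusSum _ n).range := by
    have ha := pow_two_pow_add_one_mem_ker hK a
    rw [← range_iterateFrobeniusAddId_eq_ker hn0 hK, ← frobeniusSum_comp_frobeniusSum_two,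
      AddMonoidHom.range_comp] at ha
    exact AddSubgroup.map_le_range _ _ ha
  have hAT_eq : ⇑(frobeniusSum _ n) = hAT n := funext (frobeniusSum_apply n)
  rw [← hAT_eq, Nat.div_eq_of_eq_mul_left two_pos (Nat.two_pow_pred_mul_two hn0).symm,
    ← card_ker_frobeniusSum hn0 hK]
  exact (frobeniusSum (GaloisField 2 (2 * n)) n).card_fiber_eq_card_ker hmem
end

section
/- Let $q \geq 4$ be a power of 2. The numerical semigroup generated by $q-1$, $q$, and $q+1$ has genus (number of positive integers not in the semigroup) equal to $q(q-2)/4$. -/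
/-!
A sum of `s` generators of `⟨p, p + 1, p + 2⟩` can take every value in `[s * p, s * (p + 2)]`,
so the gaps are exactly the integers strictly between `s * (p + 2)` and `(s + 1) * p`. The `s`-th
such block has `p - 1 - 2 * s` elements, and adding these up gives `⌊p ^ 2 / 4⌋`. For
`p = 2 ^ n - 1` this equals `2 ^ n * (2 ^ n - 2) / 4`.
-/

open Finset

def consecutiveGaps (p : ℕ) : Set ℕ :=
  {m | 0 < m ∧ ¬ ∃ i j k : ℕ, m = i * p + j * (p + 1) + k * (p + 2)}

theorem exists_combination_iff (p m : ℕ) :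
    (∃ i j k : ℕ, m = i * p + j * (p + 1) + k * (p + 2)) ↔
      ∃ s : ℕ, s * p ≤ m ∧ m ≤ s * (p + 2) := by
  constructor
  · rintro ⟨i, j, k, rfl⟩
    exact ⟨i + j + k, by nlinarith, by nlinarith⟩
  · rintro ⟨s, hlo, hhi⟩
    obtain ⟨d, rfl, hd⟩ : ∃ d, m = s * p + d ∧ d ≤ 2 * s :=
      ⟨m - s * p, by omega, by rw [mul_add] at hhi; omega⟩
    -- of the `s` generators, `d / 2` are `p + 2`, `d % 2` are `p + 1` and the rest are `p`
    refine ⟨s - d / 2 - d % 2, d % 2, d / 2, ?_⟩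
    have hs : s = (s - d / 2 - d % 2) + d % 2 + d / 2 := by omega
    conv_lhs => rw [hs]
    have := Nat.div_add_mod d 2
    nlinarith

theorem mem_consecutiveGaps_iff (p m : ℕ) :
    m ∈ consecutiveGaps p ↔ ∃ s : ℕ, s * (p + 2) < m ∧ m < (s + 1) * p := by
  rw [consecutiveGaps, Set.mem_ofPred_eq, exists_combination_iff]
  constructor
  · rintro ⟨hm, hgap⟩
    push Not at hgap
    set s := m / (p + 2)
    have hlo : s * (p + 2) ≤ m := Nat.div_mul_le_self m (p + 2)
    have hhi : m < (s + 1) * (p + 2) := (Nat.div_lt_iff_lt_mul (by omega)).1 (Nat.lt_succ_self _)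
    refine ⟨s, ?_, ?_⟩
    · exact lt_of_le_of_ne hlo fun h => (hgap s (by nlinarith)).not_ge h.ge
    · by_contra! h
      exact (hgap (s + 1) h).not_ge hhi.le
  · rintro ⟨s, hlo, hhi⟩
    refine ⟨by omega, ?_⟩
    rintro ⟨t, htlo, hthi⟩
    rcases le_or_gt t s with hts | hst
    · nlinarith [Nat.mul_le_mul_right (p + 2) hts]
    · nlinarith [Nat.mul_le_mul_right p hst]

theorem card_Ioo_mul_add_two_succ_mul (p s : ℕ) :
    #(Ioo (s * (p + 2)) ((s + 1) * p)) = p - 1 - 2 * s := by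
  rw [Nat.card_Ioo, mul_add, add_mul, one_mul]
  omega

theorem consecutiveGaps_eq_biUnion (p : ℕ) :
    consecutiveGaps p = ↑((range (p / 2)).biUnion fun s => Ioo (s * (p + 2)) ((s + 1) * p)) := by
  ext m
  simp only [mem_consecutiveGaps_iff, coe_biUnion, mem_coe, mem_range, mem_Ioo, Set.mem_iUnion,
    exists_prop]
  refine exists_congr fun s => ⟨fun h => ⟨?_, h⟩, And.right⟩
  obtain ⟨hlo, hhi⟩ := h
  rw [mul_add] at hlo
  rw [add_mul, one_mul] at hhi
  omega

theorem pairwiseDisjoint_Ioo_mul_add_two_succ_mul (p : ℕ) (t : Set ℕ) :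
    t.PairwiseDisjoint fun s => Ioo (s * (p + 2)) ((s + 1) * p) := by
  intro s _ s' _ hss'
  refine disjoint_left.2 fun m hm hm' => hss' ?_
  -- the block of index `s` lies in `[s * p, (s + 1) * p)`, so `s = m / p`
  rw [mem_Ioo] at hm hm'
  rw [← Nat.div_eq_of_lt_le (by nlinarith) hm.2, ← Nat.div_eq_of_lt_le (by nlinarith) hm'.2]

theorem sum_range_div_two_sub_one_sub_two_mul (p : ℕ) : ∑ s ∈ range (p / 2), (p - 1 - 2 * s) = p ^ 2 / 4 := by
  induction p using Nat.twoStepInduction with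
  | zero => rfl
  | one => rfl
  | more p ih _ =>
    rw [show (p + 2) / 2 = p / 2 + 1 by omega, sum_range_succ']
    simp_rw [show ∀ s, p + 2 - 1 - 2 * (s + 1) = p - 1 - 2 * s by omega]
    rw [ih, show (p + 2) ^ 2 = p ^ 2 + (p + 1) * 4 by ring, Nat.add_mul_div_right _ _ four_pos]
    omega

theorem ncard_consecutiveGaps (p : ℕ) : (consecutiveGaps p).ncard = p ^ 2 / 4 := by
  rw [consecutiveGaps_eq_biUnion, Set.ncard_coe_finset,
    card_biUnion (pairwiseDisjoint_Ioo_mul_add_two_succ_mul p _)]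
  simp only [card_Ioo_mul_add_two_succ_mul, sum_range_div_two_sub_one_sub_two_mul]

theorem sub_one_sq_div_four_of_even {q : ℕ} (hq : Even q) : (q - 1) ^ 2 / 4 = q * (q - 2) / 4 := by
  obtain ⟨u, rfl⟩ := hq.two_dvd
  rcases u with _ | u
  · rfl
  · rw [show (2 * (u + 1) - 1) ^ 2 = 1 + u * (u + 1) * 4 by
        rw [show 2 * (u + 1) - 1 = 2 * u + 1 by omega]; ring,
      show 2 * (u + 1) * (2 * (u + 1) - 2) = u * (u + 1) * 4 by
        rw [show 2 * (u + 1) - 2 = 2 * u by omega]; ring]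
    omega

theorem stmt5_general (n : ℕ) :
    Set.ncard {m : ℕ | 0 < m ∧
        ¬ ∃ i j k : ℕ, m = i * (2 ^ n - 1) + j * 2 ^ n + k * (2 ^ n + 1)} =
      2 ^ n * (2 ^ n - 2) / 4 := by
  have hq : 2 ^ n = (2 ^ n - 1) + 1 := (Nat.sub_add_cancel Nat.one_le_two_pow).symm
  have hgaps := ncard_consecutiveGaps (2 ^ n - 1)
  rw [consecutiveGaps, ← hq, show 2 ^ n - 1 + 2 = 2 ^ n + 1 by omega] at hgaps
  rw [hgaps]
  rcases n with _ | n
  · rfl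
  · exact sub_one_sq_div_four_of_even (Nat.even_pow.2 ⟨even_two, n.succ_ne_zero⟩)

theorem stmt5 (n : ℕ) (hn : 2 ≤ n) :
    Set.ncard {m : ℕ | 0 < m ∧
        ¬ ∃ i j k : ℕ, m = i * (2 ^ n - 1) + j * 2 ^ n + k * (2 ^ n + 1)} =
      2 ^ n * (2 ^ n - 2) / 4 :=
  stmt5_general n
end

section
/- Let $q = 2^n$ with $n \geq 2$. Define $G$ to be the set of triples $(a,b,c) \in \mathbb{F}_{q^2}^3$ with $a^{q+1} = 1$ and $b^{q+1} = h(c)$, where $h(y) = y^{q/2} + \cdots + y$, equipped with the operation $(a_2,b_2,c_2) \cdot (a_1,b_1,c_1) = (a_1 a_2,\ a_1 b_2 + b_1,\ (a_1 b_2 b_1^q)^2 + a_1 b_2 b_1^q + c_1 + c_2)$. Then $G$ is a group. -/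
/-- Membership in the automorphism group `G`: triples `(a,b,c)` with
    `a^(q+1) = 1` and `b^(q+1) = h(c)`. -/
noncomputable def inG (n : ℕ)
    (t : GaloisField 2 (2*n) × GaloisField 2 (2*n) × GaloisField 2 (2*n)) : Prop :=
  t.1 ^ (2 ^ n + 1) = 1 ∧ t.2.1 ^ (2 ^ n + 1) = hAT n t.2.2

/-- The group law `(a₂,b₂,c₂) ⬝ (a₁,b₁,c₁) =
    (a₁a₂, a₁b₂ + b₁, (a₁b₂b₁^q)² + a₁b₂b₁^q + c₁ + c₂)`. -/
noncomputable def mulG (n : ℕ)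
    (t₂ t₁ : GaloisField 2 (2*n) × GaloisField 2 (2*n) × GaloisField 2 (2*n)) :
    GaloisField 2 (2*n) × GaloisField 2 (2*n) × GaloisField 2 (2*n) :=
  (t₁.1 * t₂.1, t₁.1 * t₂.2.1 + t₁.2.1,
    (t₁.1 * t₂.2.1 * t₁.2.1 ^ (2 ^ n)) ^ 2 + t₁.1 * t₂.2.1 * t₁.2.1 ^ (2 ^ n)
      + t₁.2.2 + t₂.2.2)


/-!
Write `q = 2^n`. Over `𝔽_{q²}` the map `x ↦ x^q` is an involutive field automorphism, and `h`
is additive with `h(s² + s) = s^q + s`, since `(h c)² + h c = c^q + c` telescopes. The product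
of two elements of `G` lies in `G` because, for `X = a₁b₂b₁^q`, the cross terms of
`(a₁b₂ + b₁)^{q+1}` are exactly `X^q + X = h(X² + X)`. Associativity reduces, via the additivity of
`s ↦ s² + s` in characteristic `2`, to a linear identity that uses `a₁^{q+1} = 1`. The inverse of
`(a, b, c)` is `(a^q, a^q b, c^q)`, and checking it amounts to `(h c)² + h c + c^q + c = 0`.
-/

open Finset

section CharTwo

variable {R : Type*} [CommRing R] [CharP R 2]

theorem sq_add_sum_pow_two_pow (s : R) (m : ℕ) :
    (∑ i ∈ range m, s ^ 2 ^ i) ^ 2 + ∑ i ∈ range m, s ^ 2 ^ i = s ^ 2 ^ m + s := by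
  induction m with
  | zero => simp [CharTwo.add_self_eq_zero]
  | succ m ih =>
    rw [sum_range_succ, CharTwo.add_sq, ← pow_mul, ← pow_succ]
    linear_combination ih + s ^ 2 ^ m * CharTwo.two_eq_zero (R := R)

theorem sq_add_self_add_sq_add_self (x y : R) :
    x ^ 2 + x + (y ^ 2 + y) = (x + y) ^ 2 + (x + y) := by
  rw [CharTwo.add_sq]; ring

end CharTwo

section AbdonTorres

variable {n : ℕ}

theorem pow_two_pow_pow_two_pow (x : GaloisField 2 (2 * n)) : (x ^ 2 ^ n) ^ 2 ^ n = x := by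
  rcases Nat.eq_zero_or_pos n with rfl | hn
  · simp
  have : Fintype (GaloisField 2 (2 * n)) := Fintype.ofFinite _
  have hcard : Fintype.card (GaloisField 2 (2 * n)) = 2 ^ (2 * n) := by
    rw [← Nat.card_eq_fintype_card, GaloisField.card 2 (2 * n) (by omega)]
  rw [← pow_mul, ← pow_add, ← two_mul, ← hcard, FiniteField.pow_card]

theorem pow_two_pow_add_one_pow_two_pow (b : GaloisField 2 (2 * n)) :
    (b ^ (2 ^ n + 1)) ^ 2 ^ n = b ^ (2 ^ n + 1) := by
  rw [pow_succ, mul_pow, pow_two_pow_pow_two_pow, mul_comm b]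

theorem hAT_add (x y : GaloisField 2 (2 * n)) : hAT n (x + y) = hAT n x + hAT n y := by
  simp only [hAT, ← sum_add_distrib, add_pow_char_pow]

theorem hAT_zero : hAT n (0 : GaloisField 2 (2 * n)) = 0 :=
  sum_eq_zero fun _ _ => zero_pow (by positivity)

theorem hAT_pow_two_pow (x : GaloisField 2 (2 * n)) (k : ℕ) :
    hAT n (x ^ 2 ^ k) = hAT n x ^ 2 ^ k := by
  simp only [hAT, sum_pow_char_pow, ← pow_mul, mul_comm]

theorem sq_hAT_add_hAT (c : GaloisField 2 (2 * n)) : hAT n c ^ 2 + hAT n c = c ^ 2 ^ n + c :=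
  sq_add_sum_pow_two_pow c n

theorem hAT_sq_add_self (s : GaloisField 2 (2 * n)) : hAT n (s ^ 2 + s) = s ^ 2 ^ n + s := by
  have hsq : hAT n (s ^ 2) = hAT n s ^ 2 := by simpa using hAT_pow_two_pow s 1
  rw [hAT_add, hsq, sq_hAT_add_hAT]

end AbdonTorres

section GroupLaw

variable {n : ℕ}
  {t t₁ t₂ t₃ : GaloisField 2 (2 * n) × GaloisField 2 (2 * n) × GaloisField 2 (2 * n)}

theorem inG_mulG (h₂ : inG n t₂) (h₁ : inG n t₁) : inG n (mulG n t₂ t₁) := by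
  obtain ⟨a₂, b₂, c₂⟩ := t₂
  obtain ⟨a₁, b₁, c₁⟩ := t₁
  obtain ⟨ha₂, hb₂⟩ := h₂
  obtain ⟨ha₁, hb₁⟩ := h₁
  dsimp only at ha₂ hb₂ ha₁ hb₁
  refine ⟨by simp only [mulG, mul_pow, ha₁, ha₂, one_mul], ?_⟩
  simp only [mulG]
  rw [hAT_add, hAT_add, hAT_sq_add_self, ← hb₁, ← hb₂, pow_succ, add_pow_char_pow, mul_pow,
    mul_pow, pow_two_pow_pow_two_pow]
  linear_combination b₂ ^ (2 ^ n + 1) * ha₁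

theorem mulG_assoc (ha₁ : t₁.1 ^ (2 ^ n + 1) = 1) :
    mulG n (mulG n t₃ t₂) t₁ = mulG n t₃ (mulG n t₂ t₁) := by
  obtain ⟨a₃, b₃, c₃⟩ := t₃
  obtain ⟨a₂, b₂, c₂⟩ := t₂
  obtain ⟨a₁, b₁, c₁⟩ := t₁
  simp only [mulG, Prod.mk.injEq]
  refine ⟨by ring, by ring, ?_⟩
  have key : a₁ * (a₂ * b₃ + b₂) * b₁ ^ 2 ^ n + a₂ * b₃ * b₂ ^ 2 ^ n
      = a₁ * a₂ * b₃ * (a₁ * b₂ + b₁) ^ 2 ^ n + a₁ * b₂ * b₁ ^ 2 ^ n := by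
    rw [add_pow_char_pow, mul_pow]
    linear_combination -(a₂ * b₃ * b₂ ^ 2 ^ n) * ha₁
  have hsum := congrArg (fun x => x ^ 2 + x) key
  simp only [← sq_add_self_add_sq_add_self] at hsum
  linear_combination hsum

theorem inG_one : inG n (1, 0, 0) :=
  ⟨one_pow _, by rw [zero_pow (by positivity), hAT_zero]⟩

theorem mulG_one : mulG n t (1, 0, 0) = t := by
  simp [mulG]

theorem one_mulG : mulG n (1, 0, 0) t = t := by
  simp [mulG]

noncomputable def invG (n : ℕ)
    (t : GaloisField 2 (2 * n) × GaloisField 2 (2 * n) × GaloisField 2 (2 * n)) :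
    GaloisField 2 (2 * n) × GaloisField 2 (2 * n) × GaloisField 2 (2 * n) :=
  (t.1 ^ 2 ^ n, t.1 ^ 2 ^ n * t.2.1, t.2.2 ^ 2 ^ n)

theorem inG_invG (ht : inG n t) : inG n (invG n t) := by
  obtain ⟨a, b, c⟩ := t
  obtain ⟨ha, hb⟩ := ht
  dsimp only at ha hb
  have ha' : (a ^ 2 ^ n) ^ (2 ^ n + 1) = 1 := by rw [pow_right_comm, ha, one_pow]
  refine ⟨ha', ?_⟩
  rw [invG, mul_pow, ha', one_mul, hAT_pow_two_pow, ← hb, pow_two_pow_add_one_pow_two_pow]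

theorem mulG_invG (ht : inG n t) : mulG n t (invG n t) = (1, 0, 0) := by
  obtain ⟨a, b, c⟩ := t
  obtain ⟨ha, hb⟩ := ht
  dsimp only at ha hb
  have hnorm : a ^ 2 ^ n * b * (a ^ 2 ^ n * b) ^ 2 ^ n = hAT n c := by
    rw [mul_pow, pow_two_pow_pow_two_pow, ← hb]
    linear_combination b ^ (2 ^ n + 1) * ha
  simp only [mulG, invG, Prod.mk.injEq, hnorm]
  refine ⟨by linear_combination ha, CharTwo.add_self_eq_zero _, ?_⟩
  rw [sq_hAT_add_hAT]
  linear_combination (c ^ 2 ^ n + c) * CharTwo.two_eq_zero (R := GaloisField 2 (2 * n))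

theorem invG_mulG (ht : inG n t) : mulG n (invG n t) t = (1, 0, 0) := by
  obtain ⟨a, b, c⟩ := t
  obtain ⟨ha, hb⟩ := ht
  dsimp only at ha hb
  have hnorm : a * (a ^ 2 ^ n * b) * b ^ 2 ^ n = hAT n c := by
    rw [← hb]
    linear_combination b ^ (2 ^ n + 1) * ha
  simp only [mulG, invG, Prod.mk.injEq, hnorm]
  refine ⟨by linear_combination ha, ?_, ?_⟩
  · linear_combination b * ha + b * CharTwo.two_eq_zero (R := GaloisField 2 (2 * n))
  · rw [sq_hAT_add_hAT]
    linear_combination (c ^ 2 ^ n + c) * CharTwo.two_eq_zero (R := GaloisField 2 (2 * n))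

end GroupLaw

theorem stmt6_general (n : ℕ) :
    (∀ t₂ t₁, inG n t₂ → inG n t₁ → inG n (mulG n t₂ t₁)) ∧
    (∀ t₃ t₂ t₁, inG n t₃ → inG n t₂ → inG n t₁ →
      mulG n (mulG n t₃ t₂) t₁ = mulG n t₃ (mulG n t₂ t₁)) ∧
    inG n (1, 0, 0) ∧
    (∀ t, inG n t → mulG n t (1, 0, 0) = t ∧ mulG n (1, 0, 0) t = t) ∧
    (∀ t, inG n t → ∃ t', inG n t' ∧
      mulG n t t' = (1, 0, 0) ∧ mulG n t' t = (1, 0, 0)) :=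
  ⟨fun _ _ => inG_mulG, fun _ _ _ _ _ h₁ => mulG_assoc h₁.1, inG_one,
    fun _ _ => ⟨mulG_one, one_mulG⟩,
    fun _ ht => ⟨_, inG_invG ht, mulG_invG ht, invG_mulG ht⟩⟩

theorem stmt6 (n : ℕ) (hn : 2 ≤ n) :
    (∀ t₂ t₁, inG n t₂ → inG n t₁ → inG n (mulG n t₂ t₁)) ∧
    (∀ t₃ t₂ t₁, inG n t₃ → inG n t₂ → inG n t₁ →
      mulG n (mulG n t₃ t₂) t₁ = mulG n t₃ (mulG n t₂ t₁)) ∧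
    inG n (1, 0, 0) ∧
    (∀ t, inG n t → mulG n t (1, 0, 0) = t ∧ mulG n (1, 0, 0) t = t) ∧
    (∀ t, inG n t → ∃ t', inG n t' ∧
      mulG n t t' = (1, 0, 0) ∧ mulG n t' t = (1, 0, 0)) :=
  stmt6_general n
end

section
/- Let $q = 2^n$ with $n \geq 2$ and suppose $a, E, A, B, b, c \in \mathbb{F}_{q^2}$ with $a \neq 0$, $E \neq 0$ satisfy: $E^{q/2} = a^{q+1}$, $A^{q/2} = a^q b$, $A^{q/2^{j+1}} + B^{q/2^j} = 0$ for $1 \leq j \leq n-1$, $B = a b^q$, $E^{q/2^j} = E^{q/2}$ for $2 \leq j \leq n$, and $b^{q+1} = h(c)$. Then $E = 1$, $a^{q+1} = 1$, and $A = (a b^q)^2$. -/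
theorem GaloisField.pow_prime_pow_eq_self (p : ℕ) [Fact p.Prime] {m : ℕ} (hm : m ≠ 0)
    (x : GaloisField p m) : x ^ p ^ m = x := by
  have := Fintype.ofFinite (GaloisField p m)
  rw [← GaloisField.card p m hm, Nat.card_eq_fintype_card]
  exact FiniteField.pow_card x

theorem pow_add_one_pow_eq_self_of_pow_mul_self {M : Type*} [Monoid M] {x : M} {q : ℕ}
    (hx : x ^ (q * q) = x) : (x ^ (q + 1)) ^ q = x ^ (q + 1) := by
  rw [← pow_mul, add_mul, one_mul, pow_add, hx, ← pow_succ']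

theorem eq_one_of_pow_two_pow_eq_self_of_pow_two_pow_succ_eq_self {G₀ : Type*}
    [MonoidWithZero G₀] [IsLeftCancelMulZero G₀] {E : G₀} (hE : E ≠ 0) {k : ℕ}
    (hk : E ^ 2 ^ k = E) (hk₁ : E ^ 2 ^ (k + 1) = E) : E = 1 := by
  have hidem : IsIdempotentElem E :=
    calc E * E = (E ^ 2 ^ k) ^ 2 := by rw [hk, sq]
      _ = E ^ 2 ^ (k + 1) := by rw [← pow_mul, pow_succ]
      _ = E := hk₁
  exact (IsIdempotentElem.iff_eq_zero_or_one.mp hidem).resolve_left hE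

theorem stmt10_general (n : ℕ) (hn : 2 ≤ n) (a E A B b : GaloisField 2 (2*n))
    (hE : E ≠ 0)
    (h1 : E ^ (2 ^ (n-1)) = a ^ (2 ^ n + 1))
    (h3 : ∀ j, 1 ≤ j → j ≤ n - 1 → A ^ (2 ^ (n-j-1)) + B ^ (2 ^ (n-j)) = 0)
    (h4 : B = a * b ^ (2 ^ n))
    (h5 : ∀ j, 2 ≤ j → j ≤ n → E ^ (2 ^ (n-j)) = E ^ (2 ^ (n-1))) :
    E = 1 ∧ a ^ (2 ^ n + 1) = 1 ∧ A = (a * b ^ (2 ^ n)) ^ 2 := by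
  have hEfix : E ^ 2 ^ (n - 1) = E := by simpa using (h5 n hn le_rfl).symm
  have hEnorm : E = a ^ (2 ^ n + 1) := hEfix ▸ h1
  have haq : a ^ (2 ^ n * 2 ^ n) = a := by
    rw [← pow_add, ← two_mul]
    exact GaloisField.pow_prime_pow_eq_self 2 (by omega) a
  have hE1 : E = 1 := by
    refine eq_one_of_pow_two_pow_eq_self_of_pow_two_pow_succ_eq_self hE hEfix ?_
    rw [Nat.sub_add_cancel (by omega), hEnorm]
    exact pow_add_one_pow_eq_self_of_pow_mul_self haq
  refine ⟨hE1, hE1 ▸ hEnorm.symm, ?_⟩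
  have hA := h3 (n - 1) (by omega) le_rfl
  rw [show n - (n - 1) - 1 = 0 by omega, show n - (n - 1) = 1 by omega] at hA
  simpa [h4] using CharTwo.add_eq_zero.mp hA

theorem stmt10 (n : ℕ) (hn : 2 ≤ n) (a E A B b c : GaloisField 2 (2*n))
    (ha : a ≠ 0) (hE : E ≠ 0)
    (h1 : E ^ (2 ^ (n-1)) = a ^ (2 ^ n + 1))
    (h2 : A ^ (2 ^ (n-1)) = a ^ (2 ^ n) * b)
    (h3 : ∀ j, 1 ≤ j → j ≤ n - 1 → A ^ (2 ^ (n-j-1)) + B ^ (2 ^ (n-j)) = 0)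
    (h4 : B = a * b ^ (2 ^ n))
    (h5 : ∀ j, 2 ≤ j → j ≤ n → E ^ (2 ^ (n-j)) = E ^ (2 ^ (n-1)))
    (h6 : b ^ (2 ^ n + 1) = hAT n c) :
    E = 1 ∧ a ^ (2 ^ n + 1) = 1 ∧ A = (a * b ^ (2 ^ n)) ^ 2 :=
  stmt10_general n hn a E A B b hE h1 h3 h4 h5
end

section
/- Let $q = 2^n$ with $n \geq 2$. For the Abdón–Torres curve defined by $h(y) = x^{q+1}$ over $\mathbb{F}_{q^2}$ and a point $(a,b)$ with $a, b \neq 0$ and $a^{q+1} = h(b)$, write the local parameter $t = (x-a)/a$. Then in the formal power series expansion of $y - b$ in terms of $t$ determined by the curve equation, $y - b = a^{q+1} t + a^{2(q+1)} t^2 + O(t^3)$, so that the tangent function $t_{a,b} = (y-b) - a^q(x-a)$ satisfies $t_{a,b} = a^{2q+2} t^2 + O(t^3)$. -/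
/-!
Write `Y = b₁ t + b₂ t² + ⋯` and compare the coefficients of `t` and `t²` in
`h(Y) = A (t^(q+1) + t^q + t)`, `A = a^(q+1)`.
Since `Y` has no constant term, `Y^(2^i)` starts in degree `2^i`, so for `q ≥ 4` only the
terms `Y + Y²` of `h(Y)` and only `A t` of the right-hand side reach degree `≤ 2`. This gives
`b₁ = A` and `b₂ + b₁² = 0`, i.e. `b₂ = b₁²` in characteristic `2`.
-/

open Finset

namespace PowerSeries

variable {R : Type*} [CommRing R] {Y : R⟦X⟧}

theorem coeff_pow_of_lt_of_constantCoeff_eq_zero (hY : constantCoeff Y = 0) {k m : ℕ}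
    (h : k < m) : coeff k (Y ^ m) = 0 :=
  coeff_of_lt_order k <| (Nat.cast_lt.2 h).trans_le (le_order_pow_of_constantCoeff_eq_zero m hY)

theorem coeff_two_sq_of_constantCoeff_eq_zero (hY : constantCoeff Y = 0) :
    coeff 2 (Y ^ 2) = coeff 1 Y ^ 2 := by
  rw [sq, coeff_mul, Nat.sum_antidiagonal_eq_sum_range_succ_mk]
  simp [sum_range_succ, hY, sq]

theorem coeff_sum_pow_two_pow_of_lt_four (hY : constantCoeff Y = 0) {n k : ℕ} (hn : 2 ≤ n)
    (hk : k < 4) : coeff k (∑ i ∈ range n, Y ^ 2 ^ i) = coeff k (Y + Y ^ 2) := by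
  have htail : ∑ i ∈ Ico 2 n, coeff k (Y ^ 2 ^ i) = 0 :=
    sum_eq_zero fun i hi ↦ coeff_pow_of_lt_of_constantCoeff_eq_zero hY <|
      hk.trans_le (Nat.pow_le_pow_right two_pos (mem_Ico.1 hi).1)
  rw [← sum_range_add_sum_Ico _ hn, map_add, map_sum, map_sum, htail, add_zero]
  simp [sum_range_succ]

theorem coeff_C_mul_trinomial_of_lt {q k : ℕ} (c : R) (hk : k < q) :
    coeff k (C c * (X ^ (q + 1) + X ^ q + X)) = if k = 1 then c else 0 := by
  simp [coeff_X_pow, coeff_X, hk.ne, (hk.trans (Nat.lt_succ_self q)).ne]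

end PowerSeries

open PowerSeries

theorem stmt11_general (n : ℕ) (hn : 2 ≤ n) (a : GaloisField 2 (2*n))
    (Y : PowerSeries (GaloisField 2 (2*n)))
    (hY0 : PowerSeries.constantCoeff Y = 0)
    (hYeq : ∑ i ∈ Finset.range n, Y ^ (2 ^ i)
        = PowerSeries.C (a ^ (2 ^ n + 1)) *
            (PowerSeries.X ^ (2 ^ n + 1) + PowerSeries.X ^ (2 ^ n) + PowerSeries.X)) :
    PowerSeries.coeff 1 Y = a ^ (2 ^ n + 1) ∧
    PowerSeries.coeff 2 Y = a ^ (2 * (2 ^ n + 1)) ∧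
    PowerSeries.coeff 2
        (Y - PowerSeries.C (a ^ (2 ^ n + 1)) * PowerSeries.X)
      = a ^ (2 * 2 ^ n + 2) := by
  have hq : 4 ≤ 2 ^ n := by
    simpa using Nat.pow_le_pow_right two_pos hn
  have hcoeff : ∀ k < 4, coeff k (Y + Y ^ 2) = if k = 1 then a ^ (2 ^ n + 1) else 0 :=
    fun k hk ↦ by
      rw [← coeff_sum_pow_two_pow_of_lt_four hY0 hn hk, hYeq,
        coeff_C_mul_trinomial_of_lt _ (hk.trans_le hq)]
  have h1 := hcoeff 1 (by norm_num)
  have h2 := hcoeff 2 (by norm_num)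
  rw [map_add, coeff_pow_of_lt_of_constantCoeff_eq_zero hY0 one_lt_two, add_zero,
    if_pos rfl] at h1
  rw [map_add, coeff_two_sq_of_constantCoeff_eq_zero hY0, if_neg (by decide),
    CharTwo.add_eq_zero, h1, ← pow_mul'] at h2
  refine ⟨h1, h2, ?_⟩
  rw [map_sub, coeff_C_mul, coeff_X, if_neg (by decide), mul_zero, sub_zero, h2]
  ring

theorem stmt11 (n : ℕ) (hn : 2 ≤ n) (a b : GaloisField 2 (2*n))
    (ha : a ≠ 0) (hb : b ≠ 0) (hab : a ^ (2 ^ n + 1) = hAT n b)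
    (Y : PowerSeries (GaloisField 2 (2*n)))
    (hY0 : PowerSeries.constantCoeff Y = 0)
    (hYeq : ∑ i ∈ Finset.range n, Y ^ (2 ^ i)
        = PowerSeries.C (a ^ (2 ^ n + 1)) *
            (PowerSeries.X ^ (2 ^ n + 1) + PowerSeries.X ^ (2 ^ n) + PowerSeries.X)) :
    PowerSeries.coeff 1 Y = a ^ (2 ^ n + 1) ∧
    PowerSeries.coeff 2 Y = a ^ (2 * (2 ^ n + 1)) ∧
    PowerSeries.coeff 2
        (Y - PowerSeries.C (a ^ (2 ^ n + 1)) * PowerSeries.X)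
      = a ^ (2 * 2 ^ n + 2) :=
  stmt11_general n hn a Y hY0 hYeq
end
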